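/- The dual objective D_K has a unique minimizer c* over the cube [0,1]^n, and this minimizer lies in the open cube: c* ∈ (0,1)^n. -/

import Mathlib

/-!
The entropy term `c ↦ ∑ᵢ φ(cᵢ)` is strictly convex on the cube and the quadratic term is convex
(`K` is positive semidefinite), so `D_K` is strictly convex and attains its minimum on the compact
cube at exactly one point. That point is interior because `φ` has slope `-∞` at both ends of
`[0,1]`: moving a coordinate from a face inward by `s` changes the entropy by about `s log s`,
while the smooth quadratic term changes by at most `L s` for a Lipschitz constant `L` on the cube.
-/

open Matrix Set

/-- Binary entropy potential, with Lean's convention `Real.log 0 = 0`. -/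
noncomputable def phiEnt (c : ℝ) : ℝ := c * Real.log c + (1 - c) * Real.log (1 - c)

/-- The dual objective
`D_K(c) = (1/n)·∑ᵢ φ(cᵢ) + (1/(2λn²))·(y⊙c)ᵀ K (y⊙c)`. -/
noncomputable def dualObj {n : ℕ} (lam : ℝ) (y : Fin n → ℝ)
    (K : Matrix (Fin n) (Fin n) ℝ) (c : Fin n → ℝ) : ℝ :=
  (1 / n) * ∑ i, phiEnt (c i) +
    (1 / (2 * lam * (n : ℝ) ^ 2)) * ((fun i => y i * c i) ⬝ᵥ (K *ᵥ fun i => y i * c i))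

open Real

lemma phiEnt_eq_neg_binEntropy : phiEnt = -binEntropy := by
  ext c
  simp only [phiEnt, Pi.neg_apply, binEntropy, log_inv]
  ring

lemma continuous_phiEnt : Continuous phiEnt :=
  phiEnt_eq_neg_binEntropy ▸ binEntropy_continuous.neg

lemma strictConvexOn_phiEnt : StrictConvexOn ℝ (Icc 0 1) phiEnt :=
  phiEnt_eq_neg_binEntropy ▸ strictConcave_binEntropy.neg

lemma phiEnt_zero : phiEnt 0 = 0 := by simp [phiEnt]

lemma phiEnt_one_sub (c : ℝ) : phiEnt (1 - c) = phiEnt c := by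
  simp only [phiEnt, sub_sub_cancel]
  ring

lemma phiEnt_le_mul_log {s : ℝ} (hs₀ : 0 ≤ s) (hs₁ : s ≤ 1) : phiEnt s ≤ s * log s := by
  have : (1 - s) * log (1 - s) ≤ 0 :=
    mul_nonpos_of_nonneg_of_nonpos (by linarith) (log_nonpos (by linarith) (by linarith))
  simp only [phiEnt]
  linarith

lemma exists_phiEnt_lt_mul (M : ℝ) : ∃ s ∈ Ioo (0 : ℝ) 1, phiEnt s < M * s := by
  set s := exp (min M 0 - 1)
  have hs₀ : 0 < s := exp_pos _
  have hs₁ : s < 1 := exp_lt_one_iff.2 (by linarith [min_le_right M 0])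
  refine ⟨s, ⟨hs₀, hs₁⟩, ?_⟩
  calc phiEnt s ≤ s * log s := phiEnt_le_mul_log hs₀.le hs₁.le
    _ = (min M 0 - 1) * s := by rw [log_exp, mul_comm]
    _ < M * s := by gcongr; linarith [min_le_left M 0]

lemma StrictConvexOn.const_mul {E : Type*} [AddCommMonoid E] [Module ℝ E] {s : Set E}
    {f : E → ℝ} (hf : StrictConvexOn ℝ s f) {a : ℝ} (ha : 0 < a) :
    StrictConvexOn ℝ s fun x => a * f x := by
  refine ⟨hf.1, fun x hx y hy hxy b c hb hc hbc => ?_⟩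
  have := mul_lt_mul_of_pos_left (hf.2 hx hy hxy hb hc hbc) ha
  simp only [smul_eq_mul] at this ⊢
  linarith

lemma Matrix.PosSemidef.convexOn_dotProduct_mulVec {ι : Type*} [Fintype ι]
    {K : Matrix ι ι ℝ} (hK : K.PosSemidef) : ConvexOn ℝ univ fun x => x ⬝ᵥ K *ᵥ x := by
  refine ⟨convex_univ, fun x _ z _ a b ha hb hab => ?_⟩
  have hpos : 0 ≤ (x - z) ⬝ᵥ K *ᵥ (x - z) := by simpa using hK.dotProduct_mulVec_nonneg (x - z)
  obtain rfl : b = 1 - a := by linarith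
  -- the convexity defect is `a (1 - a) (x - z)ᵀ K (x - z)`
  simp only [mulVec_add, mulVec_sub, mulVec_smul, add_dotProduct, dotProduct_add,
    sub_dotProduct, dotProduct_sub, smul_dotProduct, dotProduct_smul, smul_eq_mul] at hpos ⊢
  nlinarith [mul_nonneg (mul_nonneg ha hb) hpos]

def unitCube (ι : Type*) : Set (ι → ℝ) := {c | ∀ i, c i ∈ Icc (0 : ℝ) 1}

variable {ι : Type*}

lemma convex_unitCube : Convex ℝ (unitCube ι) :=
  fun _ hx _ hz _ _ ha hb hab i => convex_Icc (0 : ℝ) 1 (hx i) (hz i) ha hb hab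

lemma isCompact_unitCube : IsCompact (unitCube ι) := by
  simpa [unitCube, Set.pi] using isCompact_univ_pi fun _ : ι => isCompact_Icc (a := (0 : ℝ)) (b := 1)

lemma update_mem_unitCube [DecidableEq ι] {c : ι → ℝ} (hc : c ∈ unitCube ι) (i : ι)
    {t : ℝ} (ht : t ∈ Icc (0 : ℝ) 1) : Function.update c i t ∈ unitCube ι := by
  intro j
  rcases eq_or_ne j i with rfl | h
  · simpa using ht
  · simpa [h] using hc j

variable [Fintype ι]

lemma dist_update_le [DecidableEq ι] (c : ι → ℝ) (i : ι) (t : ℝ) :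
    dist (Function.update c i t) c ≤ |t - c i| := by
  refine (dist_pi_le_iff (abs_nonneg _)).2 fun j => ?_
  rcases eq_or_ne j i with rfl | h
  · simp [Real.dist_eq]
  · simp [h]

lemma sum_phiEnt_update [DecidableEq ι] (c : ι → ℝ) (i : ι) (t : ℝ) :
    ∑ j, phiEnt (Function.update c i t j) = ∑ j, phiEnt (c j) + (phiEnt t - phiEnt (c i)) := by
  rw [← sub_eq_iff_eq_add', ← Finset.sum_sub_distrib, Fintype.sum_eq_single i]
  · simp
  · intro j h
    simp [h]

lemma strictConvexOn_sum_phiEnt :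
    StrictConvexOn ℝ (unitCube ι) fun c => ∑ i, phiEnt (c i) := by
  refine ⟨convex_unitCube, fun x hx z hz hxz a b ha hb hab => ?_⟩
  obtain ⟨i, hi⟩ := Function.ne_iff.mp hxz
  have hle : ∀ j ∈ Finset.univ,
      phiEnt (a * x j + b * z j) ≤ a * phiEnt (x j) + b * phiEnt (z j) := fun j _ =>
    strictConvexOn_phiEnt.convexOn.2 (hx j) (hz j) ha.le hb.le hab
  have hlt : phiEnt (a * x i + b * z i) < a * phiEnt (x i) + b * phiEnt (z i) :=
    strictConvexOn_phiEnt.2 (hx i) (hz i) hi ha hb hab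
  simpa [Finset.sum_add_distrib, Finset.mul_sum] using
    Finset.sum_lt_sum hle ⟨i, Finset.mem_univ i, hlt⟩

noncomputable def entropicObj (a : ℝ) (g : (ι → ℝ) → ℝ) (c : ι → ℝ) : ℝ :=
  a * ∑ i, phiEnt (c i) + g c

variable {a : ℝ} {g : (ι → ℝ) → ℝ}

lemma strictConvexOn_entropicObj (ha : 0 < a) (hg : ConvexOn ℝ (unitCube ι) g) :
    StrictConvexOn ℝ (unitCube ι) (entropicObj a g) :=
  (strictConvexOn_sum_phiEnt.const_mul ha).add_convexOn hg

variable {L : NNReal}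

lemma entropicObj_update_lt [DecidableEq ι] (hg : LipschitzOnWith L g (unitCube ι))
    {c : ι → ℝ} (hc : c ∈ unitCube ι) {i : ι} {t : ℝ} (ht : t ∈ Icc (0 : ℝ) 1)
    (h : a * phiEnt t + L * |t - c i| < a * phiEnt (c i)) :
    entropicObj a g (Function.update c i t) < entropicObj a g c := by
  have hg_step : g (Function.update c i t) - g c ≤ L * |t - c i| :=
    calc g (Function.update c i t) - g c ≤ dist (g (Function.update c i t)) (g c) :=
          le_abs_self _
      _ ≤ L * dist (Function.update c i t) c :=
          hg.dist_le_mul _ (update_mem_unitCube hc i ht) _ hc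
      _ ≤ L * |t - c i| := by gcongr; exact dist_update_le c i t
  simp only [entropicObj, sum_phiEnt_update]
  linarith

lemma mem_Ioo_of_isMinOn_entropicObj (ha : 0 < a) (hg : LipschitzOnWith L g (unitCube ι))
    {c : ι → ℝ} (hc : c ∈ unitCube ι) (hmin : IsMinOn (entropicObj a g) (unitCube ι) c)
    (i : ι) : c i ∈ Ioo 0 1 := by
  classical
  obtain ⟨s, ⟨hs₀, hs₁⟩, hs⟩ := exists_phiEnt_lt_mul (-(L / a))
  have hgain : a * phiEnt s + L * s < 0 := by
    have := mul_lt_mul_of_pos_left hs ha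
    rw [neg_mul, div_mul_eq_mul_div, mul_neg, mul_div_cancel₀ _ ha.ne'] at this
    linarith
  have hno_descent : ∀ t ∈ Icc (0 : ℝ) 1, ¬ a * phiEnt t + L * |t - c i| < a * phiEnt (c i) :=
    fun t ht h => (entropicObj_update_lt hg hc ht h).not_ge (hmin (update_mem_unitCube hc i ht))
  refine ⟨(hc i).1.lt_of_ne fun h₀ => hno_descent s ⟨hs₀.le, hs₁.le⟩ ?_,
    (hc i).2.lt_of_ne fun h₁ => hno_descent (1 - s) ⟨by linarith, by linarith⟩ ?_⟩
  · rwa [← h₀, phiEnt_zero, sub_zero, abs_of_pos hs₀, mul_zero]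
  · rwa [h₁, phiEnt_one_sub, sub_sub_cancel_left, abs_neg, abs_of_pos hs₀, ← sub_zero 1,
      phiEnt_one_sub, phiEnt_zero, mul_zero]

theorem existsUnique_isMinOn_entropicObj (ha : 0 < a) (hg_conv : ConvexOn ℝ (unitCube ι) g)
    (hg_lip : LipschitzOnWith L g (unitCube ι)) :
    ∃ c, (∀ i, c i ∈ Ioo 0 1) ∧ IsMinOn (entropicObj a g) (unitCube ι) c ∧
      ∀ c' ∈ unitCube ι, IsMinOn (entropicObj a g) (unitCube ι) c' → c' = c := by
  have hcont : ContinuousOn (entropicObj a g) (unitCube ι) :=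
    (continuous_const.mul (continuous_finsetSum _ fun i _ =>
      continuous_phiEnt.comp (continuous_apply i))).continuousOn.add hg_lip.continuousOn
  obtain ⟨c, hc, hmin⟩ := isCompact_unitCube.exists_isMinOn ⟨0, fun _ => ⟨le_rfl, zero_le_one⟩⟩ hcont
  exact ⟨c, mem_Ioo_of_isMinOn_entropicObj ha hg_lip hc hmin, hmin,
    fun c' hc' hmin' => (strictConvexOn_entropicObj ha hg_conv).eq_of_isMinOn hmin' hmin hc' hc⟩

theorem dual_minimizer_exists_unique_interior
    {n : ℕ} (hn : 0 < n)
    (K : Matrix (Fin n) (Fin n) ℝ) (hK : K.PosSemidef)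
    (y : Fin n → ℝ)
    (lam : ℝ) (hlam : 0 < lam) :
    ∃ c : Fin n → ℝ, (∀ i, c i ∈ Ioo (0:ℝ) 1) ∧
      IsMinOn (dualObj lam y K) {c' | ∀ i, c' i ∈ Icc (0:ℝ) 1} c ∧
      ∀ c' : Fin n → ℝ, (∀ i, c' i ∈ Icc (0:ℝ) 1) →
        IsMinOn (dualObj lam y K) {c'' | ∀ i, c'' i ∈ Icc (0:ℝ) 1} c' → c' = c := by
  let q : (Fin n → ℝ) → ℝ := fun c =>
    1 / (2 * lam * (n : ℝ) ^ 2) * ((fun i => y i * c i) ⬝ᵥ (K *ᵥ fun i => y i * c i))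
  have hq_conv : ConvexOn ℝ (unitCube (Fin n)) q := by
    have hquad := hK.convexOn_dotProduct_mulVec.comp_linearMap
      (LinearMap.pi fun i => y i • LinearMap.proj (R := ℝ) (φ := fun _ : Fin n => ℝ) i)
    refine ((hquad.smul (c := 1 / (2 * lam * (n : ℝ) ^ 2)) (by positivity)).subset
      (subset_univ _) convex_unitCube).congr fun c _ => ?_
    rfl
  obtain ⟨L, hq_lip⟩ : ∃ L, LipschitzOnWith L q (unitCube (Fin n)) :=
    (ContDiff.locallyLipschitz (by simp only [q, dotProduct, mulVec]; fun_prop)).locallyLipschitzOn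
      |>.exists_lipschitzOnWith_of_compact isCompact_unitCube
  exact existsUnique_isMinOn_entropicObj (by positivity) hq_conv hq_lip
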